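/- Let m ∈ (0,4] and α > 0, and let f be a four-times continuously differentiable positive solution of the self-similar profile equation α·(f − y f') + m f^{m−1} f' f''' + f^m f'''' = 0 on an open interval I ⊆ (0,∞). Define E₁(y) := α·( f(y)·f'(y) − (1/2)·y·f'(y)² ) + f(y)^m · f''(y) · f'''(y). Then E₁ is differentiable on I with E₁'(y) = (α/2)·f'(y)² + f(y)^m·f'''(y)² for all y ∈ I. Moreover, if f is a positive four-times continuously differentiable solution on [0, Y) (Y > 0) with initial conditions f(0) = 1, f'(0) = 0, f''(0) = κ, f'''(0) = 0, then E₁(y) → 0 as y → 0⁺ and E₁(y) > 0 for every y ∈ (0, Y). -/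

import Mathlib

/-!
Differentiating `E₁` and eliminating `f^m f''''` with the equation gives
`E₁' = (α/2) f'² + f^m f'''² ≥ 0`. For the initial-value solution, `E₁(0) = 0` since
`f'(0) = f'''(0) = 0`, and `E₁` is continuous on `[0, Y)`, so it is nondecreasing from `0`.
If `E₁(y) = 0` for some `y > 0`, then `E₁ ≡ 0` on `(0, y)`, so `f' ≡ f''' ≡ 0` there; hence
`f'''' = 0` and the equation collapses to `α f = 0`, contradicting `f > 0`.
-/

open Set Filter Topology MeasureTheory

noncomputable section

/-- `f` is four-times continuously differentiable on `s`, with successive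
derivatives `f1`, `f2`, `f3`, `f4`. -/
def C4On (s : Set ℝ) (f f1 f2 f3 f4 : ℝ → ℝ) : Prop :=
  (∀ y ∈ s, HasDerivWithinAt f (f1 y) s y) ∧
  (∀ y ∈ s, HasDerivWithinAt f1 (f2 y) s y) ∧
  (∀ y ∈ s, HasDerivWithinAt f2 (f3 y) s y) ∧
  (∀ y ∈ s, HasDerivWithinAt f3 (f4 y) s y) ∧
  ContinuousOn f4 s

/-- The self-similar profile ODE
`α (f − y f') + m f^(m−1) f' f''' + f^m f'''' = 0` on the set `s`,
for a function `f` with successive derivatives `f1`, `f3`, `f4`. -/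
def ProfileODE (m α : ℝ) (s : Set ℝ) (f f1 f3 f4 : ℝ → ℝ) : Prop :=
  ∀ y ∈ s,
    α * (f y - y * f1 y) + m * f y ^ (m - 1) * f1 y * f3 y + f y ^ m * f4 y = 0

-- The paper's `E₁`.
def profileEnergy (m α : ℝ) (f f1 f2 f3 : ℝ → ℝ) (y : ℝ) : ℝ :=
  α * (f y * f1 y - 1 / 2 * y * f1 y ^ 2) + f y ^ m * f2 y * f3 y

def profileDissipation (m α : ℝ) (f f1 f3 : ℝ → ℝ) (y : ℝ) : ℝ :=
  α / 2 * f1 y ^ 2 + f y ^ m * f3 y ^ 2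

section Energy

variable {m α : ℝ} {f f1 f2 f3 f4 : ℝ → ℝ}

theorem HasDerivAt.eq_zero_of_eventuallyEq_const {𝕜 F : Type*} [NontriviallyNormedField 𝕜]
    [NormedAddCommGroup F] [NormedSpace 𝕜 F] {u : 𝕜 → F} {u' c : F} {z : 𝕜}
    (h : HasDerivAt u u' z) (hu : u =ᶠ[𝓝 z] fun _ => c) : u' = 0 :=
  h.unique ((hasDerivAt_const z c).congr_of_eventuallyEq hu)

theorem hasDerivAt_profileEnergy {y : ℝ}
    (h1 : HasDerivAt f (f1 y) y) (h2 : HasDerivAt f1 (f2 y) y)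
    (h3 : HasDerivAt f2 (f3 y) y) (h4 : HasDerivAt f3 (f4 y) y) (hpos : 0 < f y)
    (hODE : α * (f y - y * f1 y) + m * f y ^ (m - 1) * f1 y * f3 y + f y ^ m * f4 y = 0) :
    HasDerivAt (profileEnergy m α f f1 f2 f3) (profileDissipation m α f f1 f3 y) y := by
  have hpow : HasDerivAt (fun y => f y ^ m) (f1 y * m * f y ^ (m - 1)) y :=
    h1.rpow_const (Or.inl hpos.ne')
  have hE := (((h1.mul h2).sub (((hasDerivAt_id y).const_mul (1 / 2 : ℝ)).mul
    (h2.pow 2))).const_mul α).add ((hpow.mul h3).mul h4)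
  refine hE.congr_deriv ?_
  simp only [profileDissipation, id_eq, Pi.pow_apply, Pi.mul_apply]
  generalize f y ^ m = P at hODE ⊢
  generalize f y ^ (m - 1) = Q at hODE ⊢
  linear_combination f2 y * hODE

theorem profileDissipation_nonneg (hα : 0 ≤ α) {y : ℝ} (hf : 0 ≤ f y) :
    0 ≤ profileDissipation m α f f1 f3 y := by
  unfold profileDissipation
  have := Real.rpow_nonneg hf m
  positivity

theorem profileDissipation_eq_zero_iff (hα : 0 < α) {y : ℝ} (hf : 0 < f y) :
    profileDissipation m α f f1 f3 y = 0 ↔ f1 y = 0 ∧ f3 y = 0 := by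
  have hfm := Real.rpow_pos_of_pos hf m
  rw [profileDissipation, add_eq_zero_iff_of_nonneg (by positivity) (by positivity)]
  simp [hα.ne', hfm.ne']

theorem C4On.continuousOn_profileEnergy {s : Set ℝ} (h : C4On s f f1 f2 f3 f4)
    (hpos : ∀ y ∈ s, 0 < f y) : ContinuousOn (profileEnergy m α f f1 f2 f3) s := by
  obtain ⟨h1, h2, h3, h4, -⟩ := h
  have hf : ContinuousOn f s := fun y hy => (h1 y hy).continuousWithinAt
  have hf1 : ContinuousOn f1 s := fun y hy => (h2 y hy).continuousWithinAt
  have hf2 : ContinuousOn f2 s := fun y hy => (h3 y hy).continuousWithinAt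
  have hf3 : ContinuousOn f3 s := fun y hy => (h4 y hy).continuousWithinAt
  have hfm : ContinuousOn (fun y => f y ^ m) s :=
    hf.rpow_const fun y hy => Or.inl (hpos y hy).ne'
  unfold profileEnergy
  fun_prop

theorem C4On.hasDerivAt {s : Set ℝ} (h : C4On s f f1 f2 f3 f4) {y : ℝ} (hy : s ∈ 𝓝 y) :
    HasDerivAt f (f1 y) y ∧ HasDerivAt f1 (f2 y) y ∧
      HasDerivAt f2 (f3 y) y ∧ HasDerivAt f3 (f4 y) y := by
  obtain ⟨h1, h2, h3, h4, -⟩ := h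
  have hys := mem_of_mem_nhds hy
  exact ⟨(h1 y hys).hasDerivAt hy, (h2 y hys).hasDerivAt hy, (h3 y hys).hasDerivAt hy,
    (h4 y hys).hasDerivAt hy⟩

theorem ProfileODE.false_of_eqOn_zero {s : Set ℝ} (hα : 0 < α)
    (hODE : ProfileODE m α s f f1 f3 f4) (hs : IsOpen s) (hne : s.Nonempty)
    (hpos : ∀ y ∈ s, 0 < f y) (h4 : ∀ y ∈ s, HasDerivAt f3 (f4 y) y)
    (h1 : EqOn f1 0 s) (h3 : EqOn f3 0 s) : False := by
  obtain ⟨y, hy⟩ := hne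
  have hf4 : f4 y = 0 :=
    (h4 y hy).eq_zero_of_eventuallyEq_const (h3.eventuallyEq_of_mem (hs.mem_nhds hy))
  have hODEy := hODE y hy
  rw [h1 hy, h3 hy, hf4] at hODEy
  have := mul_pos hα (hpos y hy)
  simp only [Pi.zero_apply] at hODEy
  linarith

variable {Y : ℝ}

theorem monotoneOn_profileEnergy (hα : 0 ≤ α) (h : C4On (Ico 0 Y) f f1 f2 f3 f4)
    (hpos : ∀ y ∈ Ico 0 Y, 0 < f y) (hODE : ProfileODE m α (Ioo 0 Y) f f1 f3 f4) :
    MonotoneOn (profileEnergy m α f f1 f2 f3) (Ico 0 Y) := by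
  refine monotoneOn_of_hasDerivWithinAt_nonneg (convex_Ico 0 Y)
    (h.continuousOn_profileEnergy hpos) (f' := profileDissipation m α f f1 f3) ?_ ?_
  · rw [interior_Ico]
    intro y hy
    obtain ⟨h1, h2, h3, h4⟩ := h.hasDerivAt (Ico_mem_nhds hy.1 hy.2)
    exact (hasDerivAt_profileEnergy h1 h2 h3 h4 (hpos y (Ioo_subset_Ico_self hy))
      (hODE y hy)).hasDerivWithinAt
  · rw [interior_Ico]
    exact fun y hy => profileDissipation_nonneg hα (hpos y (Ioo_subset_Ico_self hy)).le

theorem profileEnergy_pos (hα : 0 < α) (h : C4On (Ico 0 Y) f f1 f2 f3 f4)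
    (hpos : ∀ y ∈ Ico 0 Y, 0 < f y) (hODE : ProfileODE m α (Ioo 0 Y) f f1 f3 f4)
    (h0 : profileEnergy m α f f1 f2 f3 0 = 0) {y : ℝ} (hy : y ∈ Ioo 0 Y) :
    0 < profileEnergy m α f f1 f2 f3 y := by
  have hmono := monotoneOn_profileEnergy hα.le h hpos hODE
  have hsub : Ioo 0 y ⊆ Ioo 0 Y := Ioo_subset_Ioo_right hy.2.le
  have hsub' : Ioo 0 y ⊆ Ico 0 Y := hsub.trans Ioo_subset_Ico_self
  have h0mem : (0 : ℝ) ∈ Ico 0 Y := ⟨le_rfl, hy.1.trans hy.2⟩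
  have hymem : y ∈ Ico 0 Y := Ioo_subset_Ico_self hy
  have hE_nonneg (z : ℝ) (hz : z ∈ Ico 0 Y) : 0 ≤ profileEnergy m α f f1 f2 f3 z := by
    rw [← h0]
    exact hmono h0mem hz hz.1
  refine (hE_nonneg y hymem).lt_of_ne' fun hEy => ?_
  have hEzero : EqOn (profileEnergy m α f f1 f2 f3) 0 (Ioo 0 y) := fun z hz =>
    le_antisymm (hEy ▸ hmono (hsub' hz) hymem hz.2.le :) (hE_nonneg z (hsub' hz))
  have hderiv (z : ℝ) (hz : z ∈ Ioo 0 y) := h.hasDerivAt (Ico_mem_nhds (hsub hz).1 (hsub hz).2)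
  have hf13 (z : ℝ) (hz : z ∈ Ioo 0 y) : f1 z = 0 ∧ f3 z = 0 := by
    obtain ⟨h1, h2, h3, h4⟩ := hderiv z hz
    have hfz := hpos z (hsub' hz)
    refine (profileDissipation_eq_zero_iff (m := m) hα hfz).1 ?_
    have hE := hasDerivAt_profileEnergy h1 h2 h3 h4 hfz (hODE z (hsub hz))
    exact hE.eq_zero_of_eventuallyEq_const (hEzero.eventuallyEq_of_mem (isOpen_Ioo.mem_nhds hz))
  exact ProfileODE.false_of_eqOn_zero hα (fun z hz => hODE z (hsub hz)) isOpen_Ioo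
    (nonempty_Ioo.2 hy.1) (fun z hz => hpos z (hsub' hz))
    (fun z hz => (hderiv z hz).2.2.2) (fun z hz => (hf13 z hz).1) (fun z hz => (hf13 z hz).2)

end Energy

theorem stmt10_general (m α : ℝ) (hα : 0 < α)
    (I : Set ℝ)
    (f f1 f2 f3 f4 : ℝ → ℝ)
    (hd1 : ∀ y ∈ I, HasDerivAt f (f1 y) y)
    (hd2 : ∀ y ∈ I, HasDerivAt f1 (f2 y) y)
    (hd3 : ∀ y ∈ I, HasDerivAt f2 (f3 y) y)
    (hd4 : ∀ y ∈ I, HasDerivAt f3 (f4 y) y)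
    (hpos : ∀ y ∈ I, 0 < f y)
    (hODE : ProfileODE m α I f f1 f3 f4) :
    -- E₁ is differentiable with E₁' = (α/2) f'² + f^m f'''²
    (∀ y ∈ I, HasDerivAt
      (fun y => α * (f y * f1 y - 1 / 2 * y * f1 y ^ 2) + f y ^ m * f2 y * f3 y)
      (α / 2 * f1 y ^ 2 + f y ^ m * f3 y ^ 2) y) ∧
    -- moreover, for solutions on [0, Y) with the initial conditions:
    (∀ (Y κ : ℝ) (g g1 g2 g3 g4 : ℝ → ℝ), 0 < Y →
      C4On (Ico 0 Y) g g1 g2 g3 g4 →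
      (∀ y ∈ Ico (0 : ℝ) Y, 0 < g y) →
      ProfileODE m α (Ioo 0 Y) g g1 g3 g4 →
      g 0 = 1 → g1 0 = 0 → g2 0 = κ → g3 0 = 0 →
      Tendsto (fun y => α * (g y * g1 y - 1 / 2 * y * g1 y ^ 2) + g y ^ m * g2 y * g3 y)
        (𝓝[>] 0) (𝓝 0) ∧
      ∀ y ∈ Ioo (0 : ℝ) Y,
        0 < α * (g y * g1 y - 1 / 2 * y * g1 y ^ 2) + g y ^ m * g2 y * g3 y) := by
  refine ⟨fun y hy => hasDerivAt_profileEnergy (hd1 y hy) (hd2 y hy) (hd3 y hy) (hd4 y hy)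
    (hpos y hy) (hODE y hy), ?_⟩
  intro Y κ g g1 g2 g3 g4 hY hC4 hgpos hgODE _ hg1 _ hg3
  have hE0 : profileEnergy m α g g1 g2 g3 0 = 0 := by simp [profileEnergy, hg1, hg3]
  refine ⟨?_, fun y hy => profileEnergy_pos hα hC4 hgpos hgODE hE0 hy⟩
  have hcont := hC4.continuousOn_profileEnergy (m := m) (α := α) hgpos 0 ⟨le_rfl, hY⟩
  rw [ContinuousWithinAt, hE0] at hcont
  exact hcont.mono_left
    (nhdsWithin_le_of_mem (mem_of_superset (Ioo_mem_nhdsGT hY) Ioo_subset_Ico_self))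

theorem stmt10 (m α : ℝ) (hm0 : 0 < m) (hm4 : m ≤ 4) (hα : 0 < α)
    (I : Set ℝ) (hI : IsOpen I) (hIsub : I ⊆ Ioi 0)
    (f f1 f2 f3 f4 : ℝ → ℝ)
    (hd1 : ∀ y ∈ I, HasDerivAt f (f1 y) y)
    (hd2 : ∀ y ∈ I, HasDerivAt f1 (f2 y) y)
    (hd3 : ∀ y ∈ I, HasDerivAt f2 (f3 y) y)
    (hd4 : ∀ y ∈ I, HasDerivAt f3 (f4 y) y)
    (hc : ContinuousOn f4 I)
    (hpos : ∀ y ∈ I, 0 < f y)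
    (hODE : ProfileODE m α I f f1 f3 f4) :
    -- E₁ is differentiable with E₁' = (α/2) f'² + f^m f'''²
    (∀ y ∈ I, HasDerivAt
      (fun y => α * (f y * f1 y - 1 / 2 * y * f1 y ^ 2) + f y ^ m * f2 y * f3 y)
      (α / 2 * f1 y ^ 2 + f y ^ m * f3 y ^ 2) y) ∧
    -- moreover, for solutions on [0, Y) with the initial conditions:
    (∀ (Y κ : ℝ) (g g1 g2 g3 g4 : ℝ → ℝ), 0 < Y →
      C4On (Ico 0 Y) g g1 g2 g3 g4 →
      (∀ y ∈ Ico (0 : ℝ) Y, 0 < g y) →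
      ProfileODE m α (Ioo 0 Y) g g1 g3 g4 →
      g 0 = 1 → g1 0 = 0 → g2 0 = κ → g3 0 = 0 →
      Tendsto (fun y => α * (g y * g1 y - 1 / 2 * y * g1 y ^ 2) + g y ^ m * g2 y * g3 y)
        (𝓝[>] 0) (𝓝 0) ∧
      ∀ y ∈ Ioo (0 : ℝ) Y,
        0 < α * (g y * g1 y - 1 / 2 * y * g1 y ^ 2) + g y ^ m * g2 y * g3 y) :=
  stmt10_general m α hα I f f1 f2 f3 f4 hd1 hd2 hd3 hd4 hpos hODE
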